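/- Let R be a commutative noetherian ring, let 𝔞 be an ideal of R, and let 𝒮 be a class of R-modules closed under taking submodules and under arbitrary direct sums. Then the class 𝒮_𝔞 = {M : Γ_𝔞(M) = M and (0 :_M 𝔞) ∈ 𝒮 imply M ∈ 𝒮} is closed under arbitrary direct sums: if (M_i)_{i ∈ I} is any family of R-modules with M_i ∈ 𝒮_𝔞 for all i, then the direct sum ⨁_{i∈I} M_i ∈ 𝒮_𝔞. -/

import Mathlib

universe u

open Submodule

variable {R : Type u} [CommRing R]

/-- `Γ_a(M)`, the `a`-torsion submodule of `M`: the set of elements annihilated by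
some power of the ideal `a`. -/
def torsionGamma (a : Ideal R) (M : Type u) [AddCommGroup M] [Module R M] :
    Submodule R M :=
  ⨆ n : ℕ, Submodule.torsionBySet R M ((a ^ n : Ideal R) : Set R)

/-- The class `S` satisfies the condition `C_a` on the module `M`:
if `Γ_a(M) = M` and `(0 :_M a) ∈ S` then `M ∈ S`. -/
def CCondOn (S : ModuleCat.{u} R → Prop) (a : Ideal R) (M : ModuleCat.{u} R) : Prop :=
  torsionGamma a M = ⊤ →
    S (ModuleCat.of R (Submodule.torsionBySet R M (a : Set R))) → S M

/-- The class `S` satisfies the condition `C_a` (on every `R`-module). -/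
def CCond (S : ModuleCat.{u} R → Prop) (a : Ideal R) : Prop :=
  ∀ M : ModuleCat.{u} R, CCondOn S a M

/-- The class `S` is closed under isomorphisms of `R`-modules. -/
def IsoClosed (S : ModuleCat.{u} R → Prop) : Prop :=
  ∀ ⦃M N : ModuleCat.{u} R⦄, (M ≃ₗ[R] N) → S M → S N

/-- `S` is a Serre subcategory of the category of `R`-modules: it is closed under
isomorphisms, contains the zero module, and is closed under submodules, quotient modules
and extensions. -/
structure IsSerreClass (S : ModuleCat.{u} R → Prop) : Prop where
  iso : IsoClosed S
  zero : ∀ M : ModuleCat.{u} R, Subsingleton M → S M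
  subobj : ∀ (M : ModuleCat.{u} R) (N : Submodule R M), S M → S (ModuleCat.of R N)
  quot : ∀ (M : ModuleCat.{u} R) (N : Submodule R M), S M → S (ModuleCat.of R (M ⧸ N))
  extension : ∀ (M : ModuleCat.{u} R) (N : Submodule R M),
    S (ModuleCat.of R N) → S (ModuleCat.of R (M ⧸ N)) → S M

open DirectSum

/-!
Each summand `M i` embeds into `⨁ i, M i`. Both premises of `C_a` pass along an embedding
`N ↪ M`: `a`-torsion elements stay `a`-torsion, and `(0 :_N a)` embeds into `(0 :_M a)`, so it
lies in `S` because `S` is closed under submodules. Hence every `M i` lies in `S`, and so does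
their direct sum.
-/

section Torsion

variable {M N : Type u} [AddCommGroup M] [Module R M] [AddCommGroup N] [Module R N]

lemma mem_torsionGamma_iff (a : Ideal R) (x : M) :
    x ∈ torsionGamma a M ↔ ∃ n, x ∈ torsionBySet R M ((a ^ n : Ideal R) : Set R) :=
  mem_iSup_of_directed _ <| Monotone.directed_le fun _ _ hmn =>
    torsionBySet_le_torsionBySet_of_subset (Ideal.pow_le_pow_right hmn)

lemma mem_torsionBySet_iff_of_injective {f : N →ₗ[R] M} (hf : Function.Injective f)
    (s : Set R) (x : N) : f x ∈ torsionBySet R M s ↔ x ∈ torsionBySet R N s := by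
  simp only [mem_torsionBySet_iff, ← map_smul, map_eq_zero_iff f hf]

lemma torsionGamma_eq_top_of_injective {f : N →ₗ[R] M} (hf : Function.Injective f)
    {a : Ideal R} (h : torsionGamma a M = ⊤) : torsionGamma a N = ⊤ := by
  refine eq_top_iff'.mpr fun x => ?_
  obtain ⟨n, hn⟩ := (mem_torsionGamma_iff a (f x)).mp (eq_top_iff'.mp h (f x))
  exact (mem_torsionGamma_iff a x).mpr ⟨n, (mem_torsionBySet_iff_of_injective hf _ x).mp hn⟩

def torsionBySetRestrict (f : N →ₗ[R] M) (s : Set R) :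
    torsionBySet R N s →ₗ[R] torsionBySet R M s :=
  f.restrict fun x hx => mem_torsionBySet_iff _ _ |>.mpr fun r => by
    rw [← map_smul, (mem_torsionBySet_iff _ _).mp hx r, map_zero]

lemma torsionBySetRestrict_injective {f : N →ₗ[R] M} (hf : Function.Injective f) (s : Set R) :
    Function.Injective (torsionBySetRestrict f s) :=
  (LinearMap.injective_restrict_iff _).mpr <| by
    simp only [LinearMap.ker_eq_bot.mpr hf, disjoint_bot_right]

end Torsion

lemma IsoClosed.of_injective {S : ModuleCat.{u} R → Prop} (hiso : IsoClosed S)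
    (hsub : ∀ (M : ModuleCat.{u} R) (N : Submodule R M), S M → S (ModuleCat.of R N))
    {M N : ModuleCat.{u} R} {f : N →ₗ[R] M} (hf : Function.Injective f) (hM : S M) : S N :=
  hiso (LinearEquiv.ofInjective f hf).symm (hsub M (LinearMap.range f) hM)

lemma CCondOn.of_injective {S : ModuleCat.{u} R → Prop} {a : Ideal R} (hiso : IsoClosed S)
    (hsub : ∀ (M : ModuleCat.{u} R) (N : Submodule R M), S M → S (ModuleCat.of R N))
    {M N : ModuleCat.{u} R} (hN : CCondOn S a N) {f : N →ₗ[R] M} (hf : Function.Injective f)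
    (htop : torsionGamma a M = ⊤) (h0 : S (ModuleCat.of R (torsionBySet R M (a : Set R)))) :
    S N :=
  hN (torsionGamma_eq_top_of_injective hf htop) <|
    hiso.of_injective hsub (M := ModuleCat.of R _) (N := ModuleCat.of R _)
      (torsionBySetRestrict_injective hf _) h0

theorem stmt15_general (a : Ideal R)
    (S : ModuleCat.{u} R → Prop)
    (hiso : IsoClosed S)
    (hsub : ∀ (M : ModuleCat.{u} R) (N : Submodule R M), S M → S (ModuleCat.of R N))
    (hsum : ∀ (I : Type u) (f : I → ModuleCat.{u} R),
      (∀ i, S (f i)) → S (ModuleCat.of R (⨁ i, f i)))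
    (I : Type u) (M : I → ModuleCat.{u} R)
    (hM : ∀ i, CCondOn S a (M i)) :
    CCondOn S a (ModuleCat.of R (⨁ i, M i)) := by
  classical
  intro htop h0
  exact hsum I M fun i =>
    (hM i).of_injective hiso hsub (f := lof R I (fun j => M j) i) (of_injective i) htop h0

/-- If `S` is closed under submodules and arbitrary direct sums, then the class
`S_a = {M : S satisfies C_a on M}` is closed under arbitrary direct sums. -/
theorem stmt15 [IsNoetherianRing R] (a : Ideal R)
    (S : ModuleCat.{u} R → Prop)
    (hiso : IsoClosed S)
    (hsub : ∀ (M : ModuleCat.{u} R) (N : Submodule R M), S M → S (ModuleCat.of R N))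
    (hsum : ∀ (I : Type u) (f : I → ModuleCat.{u} R),
      (∀ i, S (f i)) → S (ModuleCat.of R (⨁ i, f i)))
    (I : Type u) (M : I → ModuleCat.{u} R)
    (hM : ∀ i, CCondOn S a (M i)) :
    CCondOn S a (ModuleCat.of R (⨁ i, M i)) :=
  stmt15_general a S hiso hsub hsum I M hM
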